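/- arXiv:2506.18784 — 8 statements merged into one kernel-verified Lean document; each statement's English description precedes it below -/
import Mathlib

section
/- Let G be a discrete virtually abelian group. Then the Stone–Čech compactification βG contains exactly one minimal closed right ideal. -/
open Filter Topology Set

/- The semigroup structure on `βG = Ultrafilter G` extending the multiplication of `G`;
with this structure `βG` is a compact right topological semigroup
(for each `y`, the map `x ↦ x * y` is continuous, see `Ultrafilter.continuous_mul_left`). -/
attribute [local instance] Ultrafilter.semigroup

/-- `R ⊆ βG` is a right ideal: `R · βG ⊆ R`. -/
def IsRightIdeal {G : Type*} [Group G] (R : Set (Ultrafilter G)) : Prop :=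
  ∀ x ∈ R, ∀ y : Ultrafilter G, x * y ∈ R

/-- A minimal closed right ideal of `βG`: a nonempty closed right ideal containing no
nonempty closed right ideal other than itself. -/
def IsMinClosedRightIdeal {G : Type*} [Group G] (R : Set (Ultrafilter G)) : Prop :=
  R.Nonempty ∧ IsClosed R ∧ IsRightIdeal R ∧
    ∀ R' : Set (Ultrafilter G), R' ⊆ R → R'.Nonempty → IsClosed R' → IsRightIdeal R' → R' = R

section aux


variable {G : Type*} [Group G]

lemma mem_mul_iff (x y : Ultrafilter G) (s : Set G) :
    s ∈ x * y ↔ {m | {m' | m * m' ∈ s} ∈ y} ∈ x :=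
  Ultrafilter.eventually_mul x y (· ∈ s)

lemma mul_pure_eq (x : Ultrafilter G) (g : G) : x * pure g = x.map (· * g) := by
  refine Ultrafilter.coe_inj.mp (Filter.ext fun s => ?_)
  simp [mem_mul_iff, Ultrafilter.mem_map, Set.preimage, Ultrafilter.mem_pure]


lemma pure_mul_eq (a : G) (y : Ultrafilter G) : pure a * y = y.map (a * ·) := by
  refine Ultrafilter.coe_inj.mp (Filter.ext fun s => ?_)
  simp [mem_mul_iff, Ultrafilter.mem_map, Set.preimage, Ultrafilter.mem_pure]



lemma mem_closure_pure {s : Set G} {x : Ultrafilter G} (hs : s ∈ x) :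
    x ∈ closure (pure '' s : Set (Ultrafilter G)) := by
  rw [ultrafilterBasis_is_basis.mem_closure_iff]
  rintro o ⟨t, rfl⟩ (hx : t ∈ x)
  obtain ⟨a, hat, has⟩ := Ultrafilter.nonempty_of_mem (x.inter_mem hx hs)
  exact ⟨pure a, by simpa using hat, ⟨a, has, rfl⟩⟩

lemma coset_lemma (N : Subgroup G) [N.Normal] [N.FiniteIndex] (x : Ultrafilter G) :
    ∃ g : G, (N : Set G) ∈ x * pure g := by
  obtain ⟨c, hc⟩ := (x.map (QuotientGroup.mk : G → G ⧸ N)).eq_pure_of_finite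
  obtain ⟨g, rfl⟩ := QuotientGroup.mk_surjective c
  refine ⟨g⁻¹, ?_⟩
  rw [mul_pure_eq, Ultrafilter.mem_map]
  have hS : (QuotientGroup.mk : G → G ⧸ N) ⁻¹' {QuotientGroup.mk g} ∈ x := by
    have : ({QuotientGroup.mk g} : Set (G ⧸ N)) ∈ x.map QuotientGroup.mk := by
      rw [hc]; exact rfl
    exact this
  refine x.mem_of_superset hS ?_
  intro a ha
  have h1 : a⁻¹ * g ∈ N := (QuotientGroup.eq).mp (by simpa using ha)
  have h2 : g⁻¹ * a ∈ N := by simpa using N.inv_mem h1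
  have h3 : g * (g⁻¹ * a) * g⁻¹ ∈ N := Subgroup.Normal.conj_mem ‹N.Normal› _ h2 g
  simpa [mul_assoc] using h3

lemma pure_mul_comm {N : Subgroup G} (hcomm : ∀ a ∈ N, ∀ b ∈ N, a * b = b * a)
    {a : G} (ha : a ∈ N) {y : Ultrafilter G} (hy : (N : Set G) ∈ y) :
    pure a * y = y * pure a := by
  rw [pure_mul_eq, mul_pure_eq]
  refine Ultrafilter.coe_inj.mp ?_
  show Filter.map _ _ = Filter.map _ _
  exact Filter.map_congr (Filter.eventually_of_mem hy (fun b hb => hcomm a ha b hb))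

lemma rightIdeals_inter_nonempty (N : Subgroup G) [N.Normal] [N.FiniteIndex]
    (hcomm : ∀ a ∈ N, ∀ b ∈ N, a * b = b * a)
    {R1 R2 : Set (Ultrafilter G)} (h1n : R1.Nonempty) (h1i : IsRightIdeal R1)
    (h2n : R2.Nonempty) (h2c : IsClosed R2) (h2i : IsRightIdeal R2) :
    (R1 ∩ R2).Nonempty := by
  obtain ⟨x, hx⟩ := h1n
  obtain ⟨y, hy⟩ := h2n
  obtain ⟨g, hg⟩ := coset_lemma N x
  obtain ⟨k, hk⟩ := coset_lemma N y
  set x' := x * pure g with hx'def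
  set y' := y * pure k with hy'def
  have hx' : x' ∈ R1 := h1i x hx _
  have hy' : y' ∈ R2 := h2i y hy _
  refine ⟨x' * y', h1i x' hx' y', ?_⟩
  have hcl : x' ∈ closure (pure '' (N : Set G)) := mem_closure_pure hg
  have hsub : (· * y') '' (pure '' (N : Set G)) ⊆ R2 := by
    rintro _ ⟨_, ⟨a, haN, rfl⟩, rfl⟩
    show pure a * y' ∈ R2
    rw [pure_mul_comm hcomm haN hk]
    exact h2i y' hy' _
  have himg : x' * y' ∈ closure ((· * y') '' (pure '' (N : Set G))) :=
    image_closure_subset_closure_image (Ultrafilter.continuous_mul_left y') ⟨x', hcl, rfl⟩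
  exact (closure_minimal hsub h2c) himg

end aux

/-- If `G` is a (discrete) virtually abelian group, then `βG` contains exactly one
minimal closed right ideal. -/
theorem unique_min_closed_right_ideal_of_virtually_abelian
    {G : Type*} [Group G] (H : Subgroup G) (hab : IsMulCommutative H) (hfi : H.FiniteIndex) :
    ∃! R : Set (Ultrafilter G), IsMinClosedRightIdeal R := by
  haveI := hab
  haveI := hfi
  set N := H.normalCore with hN
  have hcomm : ∀ a ∈ N, ∀ b ∈ N, a * b = b * a := fun a ha b hb =>
    Subgroup.mul_comm_of_mem_isMulCommutative H (H.normalCore_le ha) (H.normalCore_le hb)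
  set S : Set (Set (Ultrafilter G)) :=
    {R | R.Nonempty ∧ IsClosed R ∧ IsRightIdeal R} with hS
  have hUniv : (univ : Set (Ultrafilter G)) ∈ S :=
    ⟨⟨pure 1, trivial⟩, isClosed_univ, fun _ _ _ => trivial⟩
  have hInter : ∀ R1 ∈ S, ∀ R2 ∈ S, R1 ∩ R2 ∈ S := fun R1 h1 R2 h2 =>
    ⟨rightIdeals_inter_nonempty N hcomm h1.1 h1.2.2 h2.1 h2.2.1 h2.2.2,
      h1.2.1.inter h2.2.1, fun x hxm y => ⟨h1.2.2 x hxm.1 y, h2.2.2 x hxm.2 y⟩⟩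
  haveI : Nonempty S := ⟨⟨univ, hUniv⟩⟩
  have hdir : DirectedOn (· ⊇ ·) S := fun R1 h1 R2 h2 =>
    ⟨R1 ∩ R2, hInter R1 h1 R2 h2, inter_subset_left, inter_subset_right⟩
  have hne : (⋂₀ S).Nonempty :=
    IsCompact.nonempty_sInter_of_directed_nonempty_isCompact_isClosed hdir
      (fun R hR => hR.1) (fun R hR => hR.2.1.isCompact) (fun R hR => hR.2.1)
  have hcl : IsClosed (⋂₀ S) := isClosed_sInter (fun R hR => hR.2.1)
  have hid : IsRightIdeal (⋂₀ S) := fun x hxm y => by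
    rw [mem_sInter] at hxm ⊢
    exact fun R hR => hR.2.2 x (hxm R hR) y
  refine ⟨⋂₀ S, ⟨hne, hcl, hid, fun R' hsub h'n h'c h'i =>
    subset_antisymm hsub (sInter_subset_of_mem ⟨h'n, h'c, h'i⟩)⟩, ?_⟩
  rintro R ⟨hn, hc, hi, hmin⟩
  exact (hmin (⋂₀ S) (sInter_subset_of_mem ⟨hn, hc, hi⟩) hne hcl hid).symm
end

section
/- Let G be a discrete virtually abelian group. If A and B are completely syndetic subsets of G, then A ∩ B is completely syndetic. In particular, G cannot be partitioned into two completely syndetic sets: there is no A ⊆ G such that both A and G \ A are completely syndetic. -/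
/-- `A ⊆ G` is `n`-syndetic: there is a finite `F ⊆ G` such that every subset `S ⊆ G`
with `|S| ≤ n` satisfies `S ⊆ f • A` for some `f ∈ F`. -/
def IsNSyndetic {G : Type*} [Group G] (A : Set G) (n : ℕ) : Prop :=
  ∃ F : Finset G, ∀ S : Finset G, S.card ≤ n → ∃ f ∈ F, (S : Set G) ⊆ (f * ·) '' A

/-- `A ⊆ G` is completely syndetic: `n`-syndetic for every `n ≥ 1`. -/
def IsCS {G : Type*} [Group G] (A : Set G) : Prop :=
  ∀ n : ℕ, 1 ≤ n → IsNSyndetic A n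

private lemma mem_image_mul_iff {G : Type*} [Group G] (A : Set G) (f s : G) :
    s ∈ (f * ·) '' A ↔ f⁻¹ * s ∈ A := by
  constructor
  · rintro ⟨a, ha, rfl⟩
    simpa using ha
  · intro h
    exact ⟨f⁻¹ * s, h, by simp⟩

/-- If `H` has finite index and `A` is completely syndetic, then for every order `N ≥ 1`
there is a witness set contained in `H`. -/
private lemma exists_subgroup_witness {G : Type*} [Group G] (H : Subgroup G)
    (hfi : H.FiniteIndex) (A : Set G) (hA : IsCS A) (N : ℕ) (hN : 1 ≤ N) :
    ∃ W : Finset G, (∀ h ∈ W, h ∈ H) ∧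
      ∀ S : Finset G, S.card ≤ N → ∃ f ∈ W, (S : Set G) ⊆ (f * ·) '' A := by
  classical
  haveI := hfi
  haveI : Finite (G ⧸ H) := H.finite_quotient_of_finiteIndex
  haveI : Fintype (G ⧸ H) := Fintype.ofFinite _
  by_contra hcon
  push_neg at hcon
  have hpos : 1 ≤ Fintype.card (G ⧸ H) * N :=
    Nat.mul_pos Fintype.card_pos hN
  obtain ⟨V, hV⟩ := hA (Fintype.card (G ⧸ H) * N) hpos
  -- every coset admits a "bad" set of size ≤ N defeating all witness elements of V in it
  have key : ∀ q : G ⧸ H, ∃ Sq : Finset G, Sq.card ≤ N ∧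
      ∀ f ∈ V.filter (fun v => (QuotientGroup.mk v : G ⧸ H) = q),
        ¬ ((Sq : Set G) ⊆ (f * ·) '' A) := by
    intro q
    obtain ⟨t, ht⟩ := QuotientGroup.mk_surjective q
    set Wq := V.filter (fun v => (QuotientGroup.mk v : G ⧸ H) = q) with hWq
    have hsubH : ∀ h ∈ Wq.image (fun w => t⁻¹ * w), h ∈ H := by
      intro h hh
      obtain ⟨w, hw, rfl⟩ := Finset.mem_image.mp hh
      have : (QuotientGroup.mk w : G ⧸ H) = q := (Finset.mem_filter.mp hw).2
      have : (QuotientGroup.mk t : G ⧸ H) = QuotientGroup.mk w := by rw [ht, this]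
      exact QuotientGroup.eq.mp this
    obtain ⟨S', hS'card, hS'bad⟩ := hcon (Wq.image (fun w => t⁻¹ * w)) hsubH
    refine ⟨S'.image (fun s => t * s), le_trans Finset.card_image_le hS'card, ?_⟩
    intro f hf hcontra
    have hmem : t⁻¹ * f ∈ Wq.image (fun w => t⁻¹ * w) :=
      Finset.mem_image_of_mem _ hf
    refine hS'bad (t⁻¹ * f) hmem ?_
    intro s hs
    have hs' : t * s ∈ ((S'.image (fun s => t * s) : Finset G) : Set G) := by
      exact_mod_cast Finset.mem_image_of_mem _ (by exact_mod_cast hs)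
    have := hcontra hs'
    rw [mem_image_mul_iff] at this ⊢
    simpa [mul_assoc] using this
  choose Sq hScard hSbad using key
  set X := Finset.univ.biUnion Sq with hX
  have hXcard : X.card ≤ Fintype.card (G ⧸ H) * N := by
    calc X.card ≤ ∑ q : G ⧸ H, (Sq q).card := Finset.card_biUnion_le
    _ ≤ ∑ _q : G ⧸ H, N := Finset.sum_le_sum (fun q _ => hScard q)
    _ = Fintype.card (G ⧸ H) * N := by
        rw [Finset.sum_const, smul_eq_mul, Finset.card_univ]
  obtain ⟨f, hfV, hfsub⟩ := hV X hXcard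
  have hfmem : f ∈ V.filter
      (fun v => (QuotientGroup.mk v : G ⧸ H) = QuotientGroup.mk f) :=
    Finset.mem_filter.mpr ⟨hfV, rfl⟩
  refine hSbad (QuotientGroup.mk f) f hfmem ?_
  refine subset_trans ?_ hfsub
  exact_mod_cast Finset.coe_subset.mpr
    (Finset.subset_biUnion_of_mem Sq (Finset.mem_univ (QuotientGroup.mk f)))

/-- If `G` is virtually abelian, then the intersection of two completely syndetic subsets of `G`
is completely syndetic; in particular `G` cannot be partitioned into two completely syndetic
sets. -/
theorem cs_inter_of_virtually_abelian {G : Type*} [Group G]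
    (H : Subgroup G) (hab : IsMulCommutative H) (hfi : H.FiniteIndex) :
    (∀ A B : Set G, IsCS A → IsCS B → IsCS (A ∩ B)) ∧
      ¬ ∃ A : Set G, IsCS A ∧ IsCS Aᶜ := by
  classical
  haveI := hab
  have hinter : ∀ A B : Set G, IsCS A → IsCS B → IsCS (A ∩ B) := by
    intro A B hA hB n hn
    obtain ⟨F, hFH, hF⟩ := exists_subgroup_witness H hfi B hB n hn
    obtain ⟨E, hEH, hE⟩ := exists_subgroup_witness H hfi A hA (F.card * n + 1)
      (Nat.le_add_left 1 _)
    refine ⟨F.biUnion (fun f => E.image (fun e => f * e)), ?_⟩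
    intro S hS
    -- apply A's witness to F⁻¹ S
    have hcard1 : (F.biUnion (fun f => S.image (fun s => f⁻¹ * s))).card ≤ F.card * n + 1 := by
      calc (F.biUnion (fun f => S.image (fun s => f⁻¹ * s))).card
          ≤ ∑ f ∈ F, (S.image (fun s => f⁻¹ * s)).card := Finset.card_biUnion_le
      _ ≤ ∑ _f ∈ F, n := Finset.sum_le_sum
          (fun f _ => le_trans Finset.card_image_le hS)
      _ = F.card * n := by rw [Finset.sum_const, smul_eq_mul]
      _ ≤ F.card * n + 1 := Nat.le_succ _
    obtain ⟨e, heE, heA⟩ := hE (F.biUnion (fun f => S.image (fun s => f⁻¹ * s))) hcard1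
    -- apply B's witness to e⁻¹ S
    obtain ⟨f, hfF, hfB⟩ := hF (S.image (fun s => e⁻¹ * s))
      (le_trans Finset.card_image_le hS)
    have hcomm : e * f = f * e := by
      have := hab.is_comm.comm (⟨e, hEH e heE⟩ : H) (⟨f, hFH f hfF⟩ : H)
      exact congrArg Subtype.val this
    refine ⟨f * e, Finset.mem_biUnion.mpr ⟨f, hfF, Finset.mem_image_of_mem _ heE⟩, ?_⟩
    intro s hs
    rw [mem_image_mul_iff]
    constructor
    · -- membership in A
      have hmem : f⁻¹ * s ∈ ((F.biUnion (fun f => S.image (fun s => f⁻¹ * s)) : Finset G) : Set G) := by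
        exact_mod_cast Finset.mem_biUnion.mpr
          ⟨f, hfF, Finset.mem_image_of_mem _ (by exact_mod_cast hs)⟩
      have := heA hmem
      rw [mem_image_mul_iff] at this
      simpa [mul_assoc, mul_inv_rev] using this
    · -- membership in B
      have hmem : e⁻¹ * s ∈ ((S.image (fun s => e⁻¹ * s) : Finset G) : Set G) := by
        exact_mod_cast Finset.mem_image_of_mem _ (by exact_mod_cast hs)
      have := hfB hmem
      rw [mem_image_mul_iff] at this
      have : (e * f)⁻¹ * s ∈ B := by simpa [mul_assoc, mul_inv_rev] using this
      rwa [hcomm] at this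
  refine ⟨hinter, ?_⟩
  rintro ⟨A, hA, hAc⟩
  obtain ⟨F, hF⟩ := hinter A Aᶜ hA hAc 1 le_rfl
  obtain ⟨f, -, hsub⟩ := hF {1} (by simp)
  have h1 : (1 : G) ∈ ((({1} : Finset G)) : Set G) := by simp
  obtain ⟨x, hx, -⟩ := hsub h1
  exact hx.2 hx.1
end

section
/- Let G be a countable discrete group, let M = {x ∈ βG : r(x) is a minimal closed right ideal}, fix x ∈ M, and set J_x = ⋃_{g ∈ G} r(gx). Then J_x and M are right ideals of βG, both are invariant under left translation by G (i.e., gJ_x ⊆ J_x and gM ⊆ M for all g ∈ G), and the closures of J_x and of M in βG coincide; moreover this common closure is the smallest closed two-sided ideal of βG (the closure of K(βG)). -/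
open Filter Topology Set

-- The semigroup structure on `βG = Ultrafilter G` extending the multiplication of `G`;
-- with this structure `βG` is a compact right topological semigroup.
attribute [local instance] Ultrafilter.semigroup

/-- `I ⊆ βG` is a two-sided ideal: `I` is nonempty, `βG · I ⊆ I` and `I · βG ⊆ I`. -/
def IsTwoSidedIdeal {G : Type*} [Group G] (I : Set (Ultrafilter G)) : Prop :=
  I.Nonempty ∧ ∀ x ∈ I, ∀ y : Ultrafilter G, x * y ∈ I ∧ y * x ∈ I

/-- `r x`, the principal closed right ideal generated by `x`: the closure of `x · βG`. -/
def rIdeal {G : Type*} [Group G] (x : Ultrafilter G) : Set (Ultrafilter G) :=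
  closure (Set.range fun y : Ultrafilter G => x * y)

/-- `M = {x ∈ βG : r(x) is a minimal closed right ideal}`. -/
def MSet (G : Type*) [Group G] : Set (Ultrafilter G) :=
  {x : Ultrafilter G | IsMinClosedRightIdeal (rIdeal x)}

namespace JxAux

variable {G : Type*} [Group G]

theorem pure_mul_pure (g h : G) :
    (pure g : Ultrafilter G) * pure h = pure (g * h) :=
  Ultrafilter.coe_inj.mp <| Filter.ext' fun p => by
    simp [Ultrafilter.eventually_mul]

theorem one_pure_mul (V : Ultrafilter G) : (pure 1 : Ultrafilter G) * V = V :=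
  Ultrafilter.coe_inj.mp <| Filter.ext' fun p => by
    simp [Ultrafilter.eventually_mul]

theorem mul_pure_one (V : Ultrafilter G) : V * (pure 1 : Ultrafilter G) = V :=
  Ultrafilter.coe_inj.mp <| Filter.ext' fun p => by
    simp [Ultrafilter.eventually_mul]

theorem mem_pure_mul (g : G) (V : Ultrafilter G) (s : Set G) :
    s ∈ (pure g : Ultrafilter G) * V ↔ {m : G | g * m ∈ s} ∈ V := by
  have := Ultrafilter.eventually_mul (pure g) V (· ∈ s)
  simpa [Filter.eventually_iff] using this

theorem continuous_pureMul (g : G) :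
    Continuous fun V : Ultrafilter G => (pure g : Ultrafilter G) * V := by
  refine ultrafilterBasis_is_basis.continuous_iff.2 ?_
  rintro _ ⟨s, rfl⟩
  convert ultrafilter_isOpen_basic {m : G | g * m ∈ s} using 1
  ext u; exact mem_pure_mul g u s


/-- Left translation by `g` as a homeomorphism of `βG`. -/
def lam (g : G) : Ultrafilter G ≃ₜ Ultrafilter G where
  toFun y := (pure g : Ultrafilter G) * y
  invFun y := (pure g⁻¹ : Ultrafilter G) * y
  left_inv y := by
    show (pure g⁻¹ : Ultrafilter G) * ((pure g : Ultrafilter G) * y) = y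
    rw [← mul_assoc, pure_mul_pure, inv_mul_cancel, one_pure_mul]
  right_inv y := by
    show (pure g : Ultrafilter G) * ((pure g⁻¹ : Ultrafilter G) * y) = y
    rw [← mul_assoc, pure_mul_pure, mul_inv_cancel, one_pure_mul]
  continuous_toFun := continuous_pureMul g
  continuous_invFun := continuous_pureMul g⁻¹

theorem lam_coe (g : G) :
    ⇑(lam (G := G) g) = fun y : Ultrafilter G => (pure g : Ultrafilter G) * y := rfl

theorem image_closure_pureMul (g : G) (S : Set (Ultrafilter G)) :
    (fun y : Ultrafilter G => (pure g : Ultrafilter G) * y) '' closure S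
      = closure ((fun y : Ultrafilter G => (pure g : Ultrafilter G) * y) '' S) := by
  rw [← lam_coe]; exact (lam g).image_closure S

theorem isClosedMap_pureMul (g : G) :
    IsClosedMap (fun y : Ultrafilter G => (pure g : Ultrafilter G) * y) := by
  rw [← lam_coe]; exact (lam g).isClosedMap

theorem pureMul_pureMul_inv (g : G) (y : Ultrafilter G) :
    (pure g⁻¹ : Ultrafilter G) * ((pure g : Ultrafilter G) * y) = y := by
  rw [← mul_assoc, pure_mul_pure, inv_mul_cancel, one_pure_mul]

theorem pureMul_inv_pureMul (g : G) (y : Ultrafilter G) :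
    (pure g : Ultrafilter G) * ((pure g⁻¹ : Ultrafilter G) * y) = y := by
  rw [← mul_assoc, pure_mul_pure, mul_inv_cancel, one_pure_mul]

section RIdealLemmas

open scoped Classical

theorem rIdeal_isClosed (x : Ultrafilter G) : IsClosed (rIdeal x) := isClosed_closure

theorem mem_rIdeal_self (x : Ultrafilter G) : x ∈ rIdeal x :=
  subset_closure ⟨(pure 1 : Ultrafilter G), mul_pure_one x⟩

theorem rIdeal_nonempty (x : Ultrafilter G) : (rIdeal x).Nonempty := ⟨x, mem_rIdeal_self x⟩

theorem rIdeal_isRightIdeal (x : Ultrafilter G) : IsRightIdeal (rIdeal x) := by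
  intro w hw y
  have h1 : w * y ∈ closure ((· * y) '' Set.range fun u : Ultrafilter G => x * u) :=
    image_closure_subset_closure_image (Ultrafilter.continuous_mul_left y) ⟨w, hw, rfl⟩
  refine closure_mono ?_ h1
  rintro _ ⟨_, ⟨u, rfl⟩, rfl⟩
  exact ⟨u * y, (mul_assoc x u y).symm⟩

theorem rIdeal_subset {R : Set (Ultrafilter G)} (hcl : IsClosed R) (hri : IsRightIdeal R)
    {z : Ultrafilter G} (hz : z ∈ R) : rIdeal z ⊆ R :=
  closure_minimal (by rintro _ ⟨u, rfl⟩; exact hri z hz u) hcl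

theorem rIdeal_eq_of_mem {x : Ultrafilter G} (hx : x ∈ MSet G) {z : Ultrafilter G}
    (hz : z ∈ rIdeal x) : rIdeal z = rIdeal x :=
  hx.2.2.2 _ (rIdeal_subset (rIdeal_isClosed x) hx.2.2.1 hz) (rIdeal_nonempty z)
    (rIdeal_isClosed z) (rIdeal_isRightIdeal z)

theorem mem_MSet_of_mem_rIdeal {x : Ultrafilter G} (hx : x ∈ MSet G) {z : Ultrafilter G}
    (hz : z ∈ rIdeal x) : z ∈ MSet G := by
  show IsMinClosedRightIdeal (rIdeal z)
  rw [rIdeal_eq_of_mem hx hz]; exact hx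

theorem image_rIdeal (g : G) (x : Ultrafilter G) :
    (fun y : Ultrafilter G => (pure g : Ultrafilter G) * y) '' rIdeal x
      = rIdeal ((pure g : Ultrafilter G) * x) := by
  have h2 : (fun y : Ultrafilter G => (pure g : Ultrafilter G) * y) ''
        (Set.range fun u : Ultrafilter G => x * u)
      = Set.range fun u : Ultrafilter G => ((pure g : Ultrafilter G) * x) * u := by
    ext w
    simp only [Set.mem_image, Set.mem_range]
    constructor
    · rintro ⟨_, ⟨u, rfl⟩, rfl⟩
      exact ⟨u, mul_assoc _ x u⟩
    · rintro ⟨u, rfl⟩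
      exact ⟨x * u, ⟨u, rfl⟩, (mul_assoc _ x u).symm⟩
  show (fun y : Ultrafilter G => (pure g : Ultrafilter G) * y) ''
      closure (Set.range fun u : Ultrafilter G => x * u) = _
  rw [image_closure_pureMul, h2]
  rfl

theorem isRightIdeal_image {R : Set (Ultrafilter G)} (hri : IsRightIdeal R) (g : G) :
    IsRightIdeal ((fun y : Ultrafilter G => (pure g : Ultrafilter G) * y) '' R) := by
  intro z hz y
  simp only [Set.mem_image] at hz ⊢
  obtain ⟨w, hw, rfl⟩ := hz
  refine ⟨w * y, hri w hw y, ?_⟩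
  show (pure g : Ultrafilter G) * (w * y) = (pure g : Ultrafilter G) * w * y
  exact (mul_assoc _ w y).symm

theorem min_image (g : G) {R : Set (Ultrafilter G)} (hR : IsMinClosedRightIdeal R) :
    IsMinClosedRightIdeal ((fun y : Ultrafilter G => (pure g : Ultrafilter G) * y) '' R) := by
  obtain ⟨hne, hcl, hri, hmin⟩ := hR
  refine ⟨hne.image _, isClosedMap_pureMul g _ hcl, isRightIdeal_image hri g, ?_⟩
  intro R' hsub hne' hcl' hri'
  have key : (fun y : Ultrafilter G => (pure g⁻¹ : Ultrafilter G) * y) '' R' = R := by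
    apply hmin
    · intro z hz
      simp only [Set.mem_image] at hz
      obtain ⟨w, hw, rfl⟩ := hz
      obtain ⟨v, hv, hve⟩ := hsub hw
      have : (pure g⁻¹ : Ultrafilter G) * w = v := by
        rw [← hve]; exact pureMul_pureMul_inv g v
      rw [this]; exact hv
    · exact hne'.image _
    · exact isClosedMap_pureMul g⁻¹ _ hcl'
    · exact isRightIdeal_image hri' g⁻¹
  have h3 : (fun y : Ultrafilter G => (pure g : Ultrafilter G) * y) ''
      ((fun y : Ultrafilter G => (pure g⁻¹ : Ultrafilter G) * y) '' R') = R' := by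
    rw [← Set.image_comp]
    have : Set.EqOn ((fun y : Ultrafilter G => (pure g : Ultrafilter G) * y) ∘
        (fun y : Ultrafilter G => (pure g⁻¹ : Ultrafilter G) * y)) id R' := by
      intro w _
      exact pureMul_inv_pureMul g w
    rw [Set.image_congr this, Set.image_id]
  rw [← h3, key]

end RIdealLemmas


theorem closure_twoSided {S : Set (Ultrafilter G)} (hne : S.Nonempty) (hri : IsRightIdeal S)
    (hG : ∀ g : G, ∀ w ∈ S, (pure g : Ultrafilter G) * w ∈ S) :
    IsTwoSidedIdeal (closure S) := by
  have hpure : ∀ g : G, ∀ w ∈ closure S, (pure g : Ultrafilter G) * w ∈ closure S := by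
    intro g w hw
    have h1 : (pure g : Ultrafilter G) * w ∈
        (fun y : Ultrafilter G => (pure g : Ultrafilter G) * y) '' closure S := ⟨w, hw, rfl⟩
    rw [image_closure_pureMul] at h1
    refine closure_mono ?_ h1
    intro z hz
    simp only [Set.mem_image] at hz
    obtain ⟨v, hv, rfl⟩ := hz
    exact hG g v hv
  obtain ⟨s₀, hs₀⟩ := hne
  refine ⟨⟨s₀, subset_closure hs₀⟩, ?_⟩
  intro w hw y
  constructor
  · have h1 : w * y ∈ (· * y) '' closure S := ⟨w, hw, rfl⟩
    have h2 := image_closure_subset_closure_image (Ultrafilter.continuous_mul_left y) h1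
    refine closure_minimal ?_ isClosed_closure h2
    intro z hz
    simp only [Set.mem_image] at hz
    obtain ⟨v, hv, rfl⟩ := hz
    exact subset_closure (hri v hv y)
  · have hy : y ∈ closure (Set.range (pure : G → Ultrafilter G)) := by
      rw [denseRange_pure.closure_range]
      trivial
    have h1 : y * w ∈ (· * w) '' closure (Set.range (pure : G → Ultrafilter G)) := ⟨y, hy, rfl⟩
    have h2 := image_closure_subset_closure_image (Ultrafilter.continuous_mul_left w) h1
    refine closure_minimal ?_ isClosed_closure h2
    intro z hz
    simp only [Set.mem_image, Set.mem_range] at hz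
    obtain ⟨_, ⟨g, rfl⟩, rfl⟩ := hz
    exact hpure g w hw

theorem MSet_subset_closed_ideal {I : Set (Ultrafilter G)} (hI : IsTwoSidedIdeal I)
    (hIc : IsClosed I) : MSet G ⊆ I := by
  intro y hy
  obtain ⟨i, hi⟩ := hI.1
  have hymin : IsMinClosedRightIdeal (rIdeal y) := hy
  have h2 : y * i ∈ rIdeal y ∩ I :=
    ⟨subset_closure ⟨i, rfl⟩, (hI.2 i hi y).2⟩
  have heq : rIdeal y ∩ I = rIdeal y := by
    apply hymin.2.2.2
    · exact Set.inter_subset_left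
    · exact ⟨_, h2⟩
    · exact (rIdeal_isClosed y).inter hIc
    · intro z hz u
      exact ⟨rIdeal_isRightIdeal y z hz.1 u, (hI.2 z hz.2 u).1⟩
  have hmem : y ∈ rIdeal y ∩ I := by rw [heq]; exact mem_rIdeal_self y
  exact hmem.2

end JxAux

open JxAux in
/-- Let `G` be a countable discrete group, `x ∈ M`, and `J_x = ⋃_{g ∈ G} r(gx)`. Then `J_x` and
`M` are right ideals, both are invariant under left translation by `G`, their closures coincide,
and this common closure is the smallest closed two-sided ideal of `βG`. -/
theorem Jx_MSet_right_ideals_and_closure {G : Type*} [Group G] [Countable G]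
    (x : Ultrafilter G) (hx : x ∈ MSet G) :
    IsRightIdeal (⋃ g : G, rIdeal ((pure g : Ultrafilter G) * x)) ∧
    IsRightIdeal (MSet G) ∧
    (∀ g : G, (fun y : Ultrafilter G => (pure g : Ultrafilter G) * y) ''
        (⋃ g' : G, rIdeal ((pure g' : Ultrafilter G) * x)) ⊆
      ⋃ g' : G, rIdeal ((pure g' : Ultrafilter G) * x)) ∧
    (∀ g : G, (fun y : Ultrafilter G => (pure g : Ultrafilter G) * y) '' MSet G ⊆ MSet G) ∧
    closure (⋃ g : G, rIdeal ((pure g : Ultrafilter G) * x)) = closure (MSet G) ∧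
    IsTwoSidedIdeal (closure (MSet G)) ∧
    (∀ I : Set (Ultrafilter G), IsTwoSidedIdeal I → IsClosed I → closure (MSet G) ⊆ I) := by

  have hJ_ri : IsRightIdeal (⋃ g : G, rIdeal ((pure g : Ultrafilter G) * x)) := by
    intro w hw y
    rw [Set.mem_iUnion] at hw ⊢
    obtain ⟨g, hg⟩ := hw
    exact ⟨g, rIdeal_isRightIdeal _ w hg y⟩
  have hM_ri : IsRightIdeal (MSet G) := by
    intro y hy z
    exact mem_MSet_of_mem_rIdeal hy (subset_closure ⟨z, rfl⟩)
  have hM_inv : ∀ g : G,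
      (fun y : Ultrafilter G => (pure g : Ultrafilter G) * y) '' MSet G ⊆ MSet G := by
    intro g z hz
    simp only [Set.mem_image] at hz
    obtain ⟨w, hw, rfl⟩ := hz
    show IsMinClosedRightIdeal (rIdeal ((pure g : Ultrafilter G) * w))
    rw [← image_rIdeal]
    exact min_image g hw
  have hJ_inv : ∀ g : G, (fun y : Ultrafilter G => (pure g : Ultrafilter G) * y) ''
      (⋃ g' : G, rIdeal ((pure g' : Ultrafilter G) * x)) ⊆
      ⋃ g' : G, rIdeal ((pure g' : Ultrafilter G) * x) := by
    intro g z hz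
    simp only [Set.mem_image, Set.mem_iUnion] at hz
    obtain ⟨w, ⟨g', hw⟩, rfl⟩ := hz
    rw [Set.mem_iUnion]
    refine ⟨g * g', ?_⟩
    have h1 : (pure g : Ultrafilter G) * w ∈
        rIdeal ((pure g : Ultrafilter G) * ((pure g' : Ultrafilter G) * x)) := by
      rw [← image_rIdeal]
      exact ⟨w, hw, rfl⟩
    rwa [← mul_assoc, JxAux.pure_mul_pure] at h1
  have hJM : (⋃ g : G, rIdeal ((pure g : Ultrafilter G) * x)) ⊆ MSet G := by
    intro w hw
    rw [Set.mem_iUnion] at hw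
    obtain ⟨g, hw⟩ := hw
    have hgx : (pure g : Ultrafilter G) * x ∈ MSet G := hM_inv g ⟨x, hx, rfl⟩
    exact mem_MSet_of_mem_rIdeal hgx hw
  have hJne : (⋃ g : G, rIdeal ((pure g : Ultrafilter G) * x)).Nonempty :=
    ⟨(pure 1 : Ultrafilter G) * x, Set.mem_iUnion.2 ⟨1, mem_rIdeal_self _⟩⟩
  have hJ2 : IsTwoSidedIdeal (closure (⋃ g : G, rIdeal ((pure g : Ultrafilter G) * x))) :=
    closure_twoSided hJne hJ_ri fun g w hw => hJ_inv g ⟨w, hw, rfl⟩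
  have hM2 : IsTwoSidedIdeal (closure (MSet G)) :=
    closure_twoSided ⟨x, hx⟩ hM_ri fun g w hw => hM_inv g ⟨w, hw, rfl⟩
  have hclosure_eq : closure (⋃ g : G, rIdeal ((pure g : Ultrafilter G) * x))
      = closure (MSet G) := by
    apply Set.Subset.antisymm
    · exact closure_mono hJM
    · exact closure_minimal (MSet_subset_closed_ideal hJ2 isClosed_closure) isClosed_closure
  exact ⟨hJ_ri, hM_ri, hJ_inv, hM_inv, hclosure_eq, hM2,
    fun I hI hIc => closure_minimal (MSet_subset_closed_ideal hI hIc) hIc⟩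
end

section
/- Let G be a countable discrete group and let M = {x ∈ βG : r(x) is a minimal closed right ideal}. For every x ∈ M, the set IT(r(x)) is a subgroup of G containing the center Z(G). Moreover, if βG contains two distinct minimal closed right ideals, then for every x ∈ M the subgroup IT(r(x)) has infinite index in G, i.e., no finitely many left translates of IT(r(x)) cover G. -/
open Filter Topology Set

-- The semigroup structure on `βG = Ultrafilter G` extending the multiplication of `G`;
-- with this structure `βG` is a compact right topological semigroup.
attribute [local instance] Ultrafilter.semigroup

/-- `IT(A) = {g ∈ G : A ∩ gA ≠ ∅}`, the set of intersecting (left) translates of `A ⊆ βG`. -/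
def IT {G : Type*} [Group G] (A : Set (Ultrafilter G)) : Set G :=
  {g : G | (A ∩ ((fun y : Ultrafilter G => (pure g : Ultrafilter G) * y) '' A)).Nonempty}

section Aux

variable {G : Type*} [Group G]

/-- Left translation of `βG` by an element of `G`. -/
def lT (g : G) : Ultrafilter G → Ultrafilter G := fun y => (pure g : Ultrafilter G) * y

theorem pure_mul_eq_map (g : G) (y : Ultrafilter G) :
    (pure g : Ultrafilter G) * y = Ultrafilter.map (g * ·) y :=
  Ultrafilter.coe_inj.mp <| Filter.ext' fun p => by
    simp [Ultrafilter.eventually_mul]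

theorem mul_pure_eq_map (y : Ultrafilter G) (g : G) :
    y * (pure g : Ultrafilter G) = Ultrafilter.map (· * g) y :=
  Ultrafilter.coe_inj.mp <| Filter.ext' fun p => by
    simp [Ultrafilter.eventually_mul]

theorem mul_pure_one (y : Ultrafilter G) : y * (pure 1 : Ultrafilter G) = y := by
  rw [mul_pure_eq_map]; simp

theorem pure_one_mul (y : Ultrafilter G) : (pure 1 : Ultrafilter G) * y = y := by
  rw [pure_mul_eq_map]; simp

theorem pureMulPure (g h : G) :
    (pure g : Ultrafilter G) * pure h = pure (g * h) := by
  rw [pure_mul_eq_map]; simp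

theorem lT_comp (g h : G) (y : Ultrafilter G) : lT g (lT h y) = lT (g * h) y := by
  show (pure g : Ultrafilter G) * (pure h * y) = pure (g * h) * y
  rw [← mul_assoc, pureMulPure]

theorem continuous_lT (g : G) : Continuous (lT g) := by
  have h : lT g = Ultrafilter.map (g * ·) := funext fun y => pure_mul_eq_map g y
  rw [h]
  exact ultrafilterBasis_is_basis.continuous_iff.2 <| Set.forall_mem_range.mpr fun s ↦
    ultrafilter_isOpen_basic ((g * ·) ⁻¹' s)

theorem lT_image_comp (g h : G) (A : Set (Ultrafilter G)) :
    lT g '' (lT h '' A) = lT (g * h) '' A := by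
  rw [← Set.image_comp]
  exact congrArg (· '' A) (funext fun y => lT_comp g h y)

theorem lT_one_image (A : Set (Ultrafilter G)) : lT (1 : G) '' A = A := by
  have h : lT (1 : G) = id := funext fun y => pure_one_mul y
  rw [h, Set.image_id]

theorem lT_inv_image (g : G) (A : Set (Ultrafilter G)) : lT g⁻¹ '' (lT g '' A) = A := by
  rw [lT_image_comp, inv_mul_cancel, lT_one_image]

theorem isRightIdeal_lT_image (g : G) {R : Set (Ultrafilter G)} (h : IsRightIdeal R) :
    IsRightIdeal (lT g '' R) := by
  rintro _ ⟨z, hz, rfl⟩ y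
  exact ⟨z * y, h z hz y, (mul_assoc (pure g) z y).symm⟩

theorem isMin_lT (g : G) {R : Set (Ultrafilter G)} (hR : IsMinClosedRightIdeal R) :
    IsMinClosedRightIdeal (lT g '' R) := by
  obtain ⟨hne, hcl, hri, hmin⟩ := hR
  refine ⟨hne.image _, ((hcl.isCompact).image (continuous_lT g)).isClosed,
    isRightIdeal_lT_image g hri, ?_⟩
  intro R' hsub hne' hcl' hri'
  have h1 : lT g⁻¹ '' R' ⊆ R := by
    have h2 := Set.image_mono (f := lT g⁻¹) hsub
    rwa [lT_inv_image] at h2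
  have h2 := hmin (lT g⁻¹ '' R') h1 (hne'.image _)
    (((hcl'.isCompact).image (continuous_lT g⁻¹)).isClosed) (isRightIdeal_lT_image g⁻¹ hri')
  calc R' = lT g '' (lT g⁻¹ '' R') := by rw [lT_image_comp, mul_inv_cancel, lT_one_image]
  _ = lT g '' R := by rw [h2]

theorem min_eq_of_inter {R S : Set (Ultrafilter G)} (hR : IsMinClosedRightIdeal R)
    (hS : IsMinClosedRightIdeal S) (h : (R ∩ S).Nonempty) : R = S := by
  have hri : IsRightIdeal (R ∩ S) := fun z hz y => ⟨hR.2.2.1 z hz.1 y, hS.2.2.1 z hz.2 y⟩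
  have h1 := hR.2.2.2 (R ∩ S) Set.inter_subset_left h (hR.2.1.inter hS.2.1) hri
  have h2 := hS.2.2.2 (R ∩ S) Set.inter_subset_right h (hR.2.1.inter hS.2.1) hri
  exact h1.symm.trans h2

theorem mem_rIdeal_self (x : Ultrafilter G) : x ∈ rIdeal x :=
  subset_closure ⟨pure 1, mul_pure_one x⟩

theorem rIdeal_isRightIdeal (x : Ultrafilter G) : IsRightIdeal (rIdeal x) := by
  intro z hz y
  have h1 : (· * y) '' closure (Set.range fun w => x * w) ⊆
      closure ((· * y) '' Set.range fun w => x * w) :=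
    image_closure_subset_closure_image (Ultrafilter.continuous_mul_left y)
  have h2 : ((· * y) '' Set.range fun w => x * w) ⊆ Set.range fun w => x * w := by
    rintro _ ⟨_, ⟨w, rfl⟩, rfl⟩
    exact ⟨w * y, (mul_assoc x w y).symm⟩
  have h3 := h1 ⟨z, hz, rfl⟩
  exact closure_mono h2 h3

theorem mem_IT_iff {x : Ultrafilter G} (hx : IsMinClosedRightIdeal (rIdeal x)) (g : G) :
    g ∈ IT (rIdeal x) ↔ lT g '' (rIdeal x) = rIdeal x := by
  constructor
  · rintro ⟨w, hw1, hw2⟩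
    exact min_eq_of_inter (isMin_lT g hx) hx ⟨w, hw2, hw1⟩
  · intro h
    obtain ⟨w, hw⟩ := hx.1
    refine ⟨w, hw, ?_⟩
    show w ∈ lT g '' rIdeal x
    rw [h]; exact hw

theorem pure_comm_of_center {g : G} (hg : g ∈ Subgroup.center G) (w : Ultrafilter G) :
    (pure g : Ultrafilter G) * w = w * pure g := by
  rw [pure_mul_eq_map, mul_pure_eq_map]
  congr 1
  funext h
  exact (Subgroup.mem_center_iff.mp hg h).symm

end Aux

/-- For a countable discrete group `G` and every `x ∈ M`, the set `IT(r(x))` is a subgroup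
of `G` containing the center `Z(G)`; moreover, if `βG` contains two distinct minimal closed
right ideals, then for every `x ∈ M` no finitely many left translates of `IT(r(x))` cover `G`
(i.e. `IT(r(x))` has infinite index in `G`). -/
theorem IT_subgroup_and_infinite_index {G : Type*} [Group G] [Countable G] :
    (∀ x ∈ MSet G, ∃ H : Subgroup G,
        (H : Set G) = IT (rIdeal x) ∧ Subgroup.center G ≤ H) ∧
    ((∃ R₁ R₂ : Set (Ultrafilter G),
        IsMinClosedRightIdeal R₁ ∧ IsMinClosedRightIdeal R₂ ∧ R₁ ≠ R₂) →
      ∀ x ∈ MSet G, ¬ ∃ F : Finset G, ∀ g : G, ∃ f ∈ F, f⁻¹ * g ∈ IT (rIdeal x)) := by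
  constructor
  · -- Part 1 : subgroup containing the center
    intro x hx
    have hmin : IsMinClosedRightIdeal (rIdeal x) := hx
    refine ⟨{  carrier := IT (rIdeal x)
               mul_mem' := fun {a b} ha hb => ?_
               one_mem' := ?_
               inv_mem' := fun {a} ha => ?_ }, rfl, ?_⟩
    · have ha' := (mem_IT_iff hmin a).mp ha
      have hb' := (mem_IT_iff hmin b).mp hb
      refine (mem_IT_iff hmin (a * b)).mpr ?_
      rw [← lT_image_comp, hb', ha']
    · exact (mem_IT_iff hmin 1).mpr (lT_one_image _)
    · have ha' := (mem_IT_iff hmin a).mp ha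
      refine (mem_IT_iff hmin a⁻¹).mpr ?_
      conv_lhs => rw [← ha']
      exact lT_inv_image a _
    · intro g hg
      obtain ⟨w, hw⟩ := hmin.1
      exact ⟨w * pure g, hmin.2.2.1 w hw (pure g),
        ⟨w, hw, pure_comm_of_center hg w⟩⟩
  · -- Part 2 : infinite index
    rintro ⟨R₁, R₂, hR₁, hR₂, hRne⟩ x hx ⟨F, hF⟩
    have hmin : IsMinClosedRightIdeal (rIdeal x) := hx
    set R := rIdeal x with hRdef
    -- every left translate of `R` coincides with a translate by an element of `F`
    have hcov : ∀ a : G, ∃ f ∈ F, lT a '' R = lT f '' R := by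
      intro a
      obtain ⟨f, hfF, hf⟩ := hF a
      refine ⟨f, hfF, ?_⟩
      have h1 : lT (f⁻¹ * a) '' R = R := (mem_IT_iff hmin _).mp hf
      calc lT a '' R = lT (f * (f⁻¹ * a)) '' R := by rw [mul_inv_cancel_left]
      _ = lT f '' (lT (f⁻¹ * a) '' R) := (lT_image_comp _ _ _).symm
      _ = lT f '' R := by rw [h1]
    -- limit lemma: `u * z` is the limit along `u` of `h * z`
    have hlim : ∀ (u z : Ultrafilter G) (S : Set (Ultrafilter G)), IsClosed S →
        {h : G | lT h z ∈ S} ∈ u → u * z ∈ S := by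
      intro u z S hS hu
      have h1 : Tendsto (fun h : G => lT h z) (↑u) (𝓝 (u * z)) :=
        ((Ultrafilter.continuous_mul_left z).tendsto u).comp (Ultrafilter.tendsto_pure_self u)
      exact hS.mem_of_tendsto h1 hu
    -- each ultrafilter picks the translate class of `h * a` for `h` generic
    have hpick : ∀ (w : Ultrafilter G) (a : G), ∃ f ∈ F,
        {h : G | lT (h * a) '' R = lT f '' R} ∈ w := by
      intro w a
      have hcover : (⋃ f ∈ (F : Set G), {h : G | lT (h * a) '' R = lT f '' R}) ∈ w := by
        have he : (⋃ f ∈ (F : Set G), {h : G | lT (h * a) '' R = lT f '' R}) = Set.univ := by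
          refine Set.eq_univ_of_forall fun h => ?_
          obtain ⟨f, hfF, hf⟩ := hcov (h * a)
          exact Set.mem_biUnion hfF hf
        rw [he]; exact Filter.univ_mem
      exact (Ultrafilter.finite_biUnion_mem_iff F.finite_toSet).mp hcover
    have hminT : ∀ a : G, IsMinClosedRightIdeal (lT a '' R) := fun a => isMin_lT a hmin
    have hclT : ∀ a : G, IsClosed (lT a '' R) := fun a => (hminT a).2.1
    -- an idempotent in R
    obtain ⟨u, huR, huu⟩ := exists_idempotent_in_compact_subsemigroup
      (fun r : Ultrafilter G => Ultrafilter.continuous_mul_left r) R hmin.1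
      (hmin.2.1.isCompact) (fun z hz y hy => hmin.2.2.1 z hz y)
    -- step: if `z ∈ aR` and generically `(h a) R = b R` along `u`, then `u z ∈ bR`
    have hstep : ∀ (a b : G) (z : Ultrafilter G), z ∈ lT a '' R →
        {h : G | lT (h * a) '' R = lT b '' R} ∈ u → u * z ∈ lT b '' R := by
      intro a b z hz hD
      refine hlim u z _ (hclT b) (Filter.mem_of_superset hD ?_)
      intro h hh
      have h1 : lT h z ∈ lT h '' (lT a '' R) := Set.mem_image_of_mem _ hz
      rw [lT_image_comp, hh] at h1
      exact h1
    -- the idempotent fixes every translate: `z ∈ aR → u z ∈ aR`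
    have hfix : ∀ (a : G) (z : Ultrafilter G), z ∈ lT a '' R → u * z ∈ lT a '' R := by
      intro a z hz
      obtain ⟨b, hbF, hD⟩ := hpick u a
      obtain ⟨c, hcF, hD'⟩ := hpick u b
      have h1 : u * z ∈ lT b '' R := hstep a b z hz hD
      have h2 : u * (u * z) ∈ lT c '' R := hstep b c (u * z) h1 hD'
      have h3 : u * (u * z) = u * z := by rw [← mul_assoc, huu]
      have hbc : lT b '' R = lT c '' R :=
        min_eq_of_inter (hminT b) (hminT c) ⟨u * z, h1, h3 ▸ h2⟩
      obtain ⟨h0, hh1, hh2⟩ := Ultrafilter.nonempty_of_mem (Filter.inter_mem hD hD')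
      have h4 : lT (h0 * a) '' R = lT (h0 * b) '' R := by
        rw [Set.mem_setOf_eq] at hh1 hh2
        rw [hh1, hh2, hbc]
      have h5 : lT a '' R = lT b '' R := by
        have h6 := congrArg (Set.image (lT h0⁻¹)) h4
        rwa [lT_image_comp, lT_image_comp, inv_mul_cancel_left, inv_mul_cancel_left] at h6
      rw [h5]; exact h1
    -- every minimal closed right ideal is a translate of R
    have hident : ∀ S : Set (Ultrafilter G), IsMinClosedRightIdeal S →
        ∃ a : G, S = lT a '' R := by
      intro S hS
      obtain ⟨z, hz⟩ := hS.1
      obtain ⟨f, hfF, hmemz⟩ := hpick z 1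
      have h1 : z * u ∈ lT f '' R := by
        refine hlim z u _ (hclT f) (Filter.mem_of_superset hmemz ?_)
        intro h hh
        rw [Set.mem_setOf_eq, mul_one] at hh
        have h2 : lT h u ∈ lT h '' R := Set.mem_image_of_mem _ huR
        rwa [hh] at h2
      have h2 : z * u ∈ S := hS.2.2.1 z hz u
      exact ⟨f, min_eq_of_inter hS (hminT f) ⟨z * u, h2, h1⟩⟩
    obtain ⟨a₁, ha₁⟩ := hident R₁ hR₁
    obtain ⟨a₂, ha₂⟩ := hident R₂ hR₂
    have key : ∀ a : G, R = lT a '' R := by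
      intro a
      obtain ⟨z, hz⟩ := (hminT a).1
      have h1 : u * z ∈ lT a '' R := hfix a z hz
      have h2 : u * z ∈ R := hmin.2.2.1 u huR z
      exact min_eq_of_inter hmin (hminT a) ⟨u * z, h2, h1⟩
    exact hRne (by rw [ha₁, ha₂, ← key a₁, ← key a₂])
end

section
/- Let G be a discrete group and let Q = {g ∈ G : the centralizer C_G(g) has finite index in G} be its quasi-center. Then Q ⊆ IT(r(x)) for every x ∈ βG. -/
open Filter Topology Set

-- The semigroup structure on `βG = Ultrafilter G` extending the multiplication of `G`;
-- with this structure `βG` is a compact right topological semigroup.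
attribute [local instance] Ultrafilter.semigroup

/-- The quasi-center of `G`: elements whose centralizer has finite index in `G`. -/
def quasiCenter (G : Type*) [Group G] : Set G :=
  {g : G | (Subgroup.centralizer {g}).FiniteIndex}

lemma pure_mul_aux {G : Type*} [Group G] (g : G) (x : Ultrafilter G) :
    (pure g : Ultrafilter G) * x = x.map (g * ·) := by
  apply Ultrafilter.coe_inj.mp
  apply Filter.ext' fun p => ?_
  change (∀ᶠ m in (pure g : Ultrafilter G), ∀ᶠ m' in x, p (m * m')) ↔ _
  simp

lemma mul_pure_aux {G : Type*} [Group G] (s : G) (x : Ultrafilter G) :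
    x * (pure s : Ultrafilter G) = x.map (· * s) := by
  apply Ultrafilter.coe_inj.mp
  apply Filter.ext' fun p => ?_
  change (∀ᶠ m in x, ∀ᶠ m' in (pure s : Ultrafilter G), p (m * m')) ↔ _
  simp

/-- For a discrete group `G`, the quasi-center `Q` of `G` satisfies `Q ⊆ IT(r(x))` for every
`x ∈ βG`. -/
theorem quasiCenter_subset_IT {G : Type*} [Group G] (x : Ultrafilter G) :
    quasiCenter G ⊆ IT (rIdeal x) := by
  intro g hg
  haveI : (Subgroup.centralizer {g}).FiniteIndex := hg
  set H := Subgroup.centralizer ({g} : Set G)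
  -- push forward x to the finite quotient
  obtain ⟨q, hq⟩ := Ultrafilter.eq_pure_of_finite (x.map fun h => (QuotientGroup.mk h⁻¹ : G ⧸ H))
  obtain ⟨b, rfl⟩ := QuotientGroup.mk_surjective q
  set a := b⁻¹ with ha
  have hS : {h : G | h * a⁻¹ ∈ H} ∈ x := by
    have : {h : G | (QuotientGroup.mk h⁻¹ : G ⧸ H) = QuotientGroup.mk b} ∈ x := by
      have := Ultrafilter.mem_pure.mpr (rfl : (QuotientGroup.mk b : G ⧸ H) ∈ {QuotientGroup.mk b})
      rw [← hq, Ultrafilter.mem_map] at this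
      exact this
    refine Filter.mem_of_superset this fun h hh => ?_
    have := QuotientGroup.eq.mp hh
    -- (h⁻¹)⁻¹ * b ∈ H, i.e. h * b ∈ H
    simpa [ha] using this
  set s := a⁻¹ * g * a with hs
  have key : (pure g : Ultrafilter G) * x = x * (pure s : Ultrafilter G) := by
    rw [pure_mul_aux, mul_pure_aux]
    apply Ultrafilter.coe_inj.mp
    simp only [Ultrafilter.coe_map]
    apply Filter.map_congr
    filter_upwards [hS] with h hh
    have hk : (h * a⁻¹) * g = g * (h * a⁻¹) := (Subgroup.mem_centralizer_singleton_iff.mp hh)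
    have : g * h = h * (a⁻¹ * g * a) := by
      calc g * h = (g * (h * a⁻¹)) * a := by group
      _ = ((h * a⁻¹) * g) * a := by rw [hk]
      _ = h * (a⁻¹ * g * a) := by group
    exact this
  have hx1 : x * (pure 1 : Ultrafilter G) = x := by
    rw [mul_pure_aux]
    simp
  refine ⟨x * (pure s : Ultrafilter G), ?_, ?_⟩
  · exact subset_closure ⟨pure s, rfl⟩
  · exact ⟨x * (pure 1 : Ultrafilter G), subset_closure ⟨pure 1, rfl⟩, by rw [hx1]; exact key⟩
end

section
/- Let G be a countable discrete group and let H be a subgroup of finite index in G. Then βH has a unique minimal closed right ideal if and only if βG has a unique minimal closed right ideal. -/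
open Filter Topology Set

-- The semigroup structure on `βG = Ultrafilter G` extending the multiplication of `G`;
-- with this structure `βG` is a compact right topological semigroup.
attribute [local instance] Ultrafilter.semigroup

section Aux

variable {G : Type*} [Group G]

lemma umem_mul {s : Set G} {U V : Ultrafilter G} :
    s ∈ U * V ↔ {a | {b | a * b ∈ s} ∈ V} ∈ U := Iff.rfl

lemma umem_mul_pure {s : Set G} {U : Ultrafilter G} {g : G} :
    s ∈ U * (pure g : Ultrafilter G) ↔ {a | a * g ∈ s} ∈ U := by
  rw [umem_mul]; rfl

lemma closure_isRightIdeal {R : Set (Ultrafilter G)} (h : IsRightIdeal R) :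
    IsRightIdeal (closure R) := by
  intro x hx y
  have hc : Continuous (· * y) := Ultrafilter.continuous_mul_left y
  have : x * y ∈ (· * y) '' closure R := ⟨x, hx, rfl⟩
  have h2 : (· * y) '' closure R ⊆ closure ((· * y) '' R) := image_closure_subset_closure_image hc
  refine closure_mono ?_ (h2 this)
  rintro _ ⟨z, hz, rfl⟩
  exact h z hz y

lemma exists_min_subset (R : Set (Ultrafilter G)) (hne : R.Nonempty) (hcl : IsClosed R)
    (hid : IsRightIdeal R) : ∃ M, M ⊆ R ∧ IsMinClosedRightIdeal M := by
  set S : Set (Set (Ultrafilter G)) :=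
    {R' | R'.Nonempty ∧ IsClosed R' ∧ IsRightIdeal R'} with hS
  have hub : ∀ c ⊆ S, IsChain (· ⊆ ·) c → c.Nonempty → ∃ lb ∈ S, ∀ s ∈ c, lb ⊆ s := by
    intro c hcS hchain hcne
    refine ⟨⋂₀ c, ⟨?_, ?_, ?_⟩, fun s hs => sInter_subset_of_mem hs⟩
    · -- nonempty: compactness
      have : Nonempty c := hcne.to_subtype
      have hd : Directed (· ⊇ ·) (fun s : c => (s : Set (Ultrafilter G))) := by
        intro i j
        rcases hchain.total i.2 j.2 with h | h
        · exact ⟨i, le_refl _, h⟩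
        · exact ⟨j, h, le_refl _⟩
      have := IsCompact.nonempty_iInter_of_directed_nonempty_isCompact_isClosed
        (fun s : c => (s : Set (Ultrafilter G))) hd
        (fun i => (hcS i.2).1) (fun i => (hcS i.2).2.1.isCompact)
        (fun i => (hcS i.2).2.1)
      rwa [← sInter_eq_iInter] at this
    · exact isClosed_sInter fun s hs => (hcS hs).2.1
    · intro x hx y
      exact fun s hs => (hcS hs).2.2 x (hx s hs) y
  obtain ⟨m, hmR, hmS, hmin⟩ := zorn_superset_nonempty S hub R ⟨hne, hcl, hid⟩
  refine ⟨m, hmR, hmS.1, hmS.2.1, hmS.2.2, ?_⟩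
  intro R' hsub hne' hcl' hid'
  exact Set.Subset.antisymm hsub (hmin ⟨hne', hcl', hid'⟩ hsub)

variable (H : Subgroup G)

/-- The embedding `βH → βG`. -/
noncomputable def emb : Ultrafilter H → Ultrafilter G := Ultrafilter.map Subtype.val

lemma mem_emb {s : Set G} {U : Ultrafilter H} : s ∈ emb H U ↔ Subtype.val ⁻¹' s ∈ U :=
  Ultrafilter.mem_map

lemma emb_injective : Function.Injective (emb H) := by
  intro U V h
  ext s
  have key : ∀ W : Ultrafilter H, s ∈ W ↔ (Subtype.val '' s) ∈ emb H W := by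
    intro W
    rw [mem_emb, Set.preimage_image_eq s Subtype.val_injective]
  rw [key U, key V, h]

lemma emb_continuous : Continuous (emb H) := by
  refine ultrafilterBasis_is_basis.continuous_iff.2 ?_
  rintro _ ⟨s, rfl⟩
  have he : emb H ⁻¹' {u : Ultrafilter G | s ∈ u}
      = {v : Ultrafilter H | Subtype.val ⁻¹' s ∈ v} := by
    ext U
    exact mem_emb H
  show IsOpen (emb H ⁻¹' {u : Ultrafilter G | s ∈ u})
  rw [he]
  exact ultrafilter_isOpen_basic _

lemma emb_mul (U V : Ultrafilter H) : emb H (U * V) = emb H U * emb H V := by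
  ext s
  rw [umem_mul, mem_emb, umem_mul]
  constructor <;> intro h
  · refine (Ultrafilter.mem_map).2 ?_
    refine mem_of_superset h ?_
    intro a ha
    rw [Set.mem_preimage, mem_setOf_eq, mem_emb]
    refine mem_of_superset ha ?_
    intro b hb
    simpa using hb
  · replace h := (Ultrafilter.mem_map).1 h
    refine mem_of_superset h ?_
    intro a ha
    rw [Set.mem_preimage, mem_setOf_eq, mem_emb] at ha
    refine mem_of_superset ha ?_
    intro b hb
    simpa using hb

lemma H_mem_emb (U : Ultrafilter H) : (H : Set G) ∈ emb H U := by
  rw [mem_emb]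
  refine univ_mem' ?_
  intro a; exact a.2

lemma emb_surj {U : Ultrafilter G} (hU : (H : Set G) ∈ U) : ∃ V, emb H V = U := by
  have hrange : Set.range (Subtype.val : H → G) ∈ U := by
    rwa [Subtype.range_val]
  refine ⟨U.comap Subtype.val_injective hrange, ?_⟩
  ext s
  rw [mem_emb, Ultrafilter.mem_comap]
  rw [Set.image_preimage_eq_inter_range, Subtype.range_val]
  constructor
  · intro h; exact mem_of_superset h inter_subset_left
  · intro h; exact inter_mem h hU

lemma H_mem_mul {x y : Ultrafilter G} (hx : (H : Set G) ∈ x) (hy : (H : Set G) ∈ y) :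
    (H : Set G) ∈ x * y := by
  rw [umem_mul]
  refine mem_of_superset hx ?_
  intro a ha
  refine mem_of_superset hy ?_
  intro b hb
  exact H.mul_mem ha hb

lemma H_mem_right {x y : Ultrafilter G} (hx : (H : Set G) ∈ x) (hxy : (H : Set G) ∈ x * y) :
    (H : Set G) ∈ y := by
  rw [umem_mul] at hxy
  obtain ⟨a, ha1, ha2⟩ := Ultrafilter.nonempty_of_mem (inter_mem hxy hx)
  simp only [mem_setOf_eq] at ha1
  refine mem_of_superset ha1 ?_
  intro b hb
  exact (H.mul_mem_cancel_left ha2).1 hb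

lemma exists_translate (hH : H.FiniteIndex) (x : Ultrafilter G) :
    ∃ g : G, (H : Set G) ∈ x * (pure g : Ultrafilter G) := by
  have : Finite (Quotient (QuotientGroup.rightRel H)) :=
    Finite.of_equiv _ (QuotientGroup.quotientRightRelEquivQuotientLeftRel H).symm
  obtain ⟨c, hc⟩ := Ultrafilter.eq_pure_of_finite (x.map (Quotient.mk (QuotientGroup.rightRel H)))
  obtain ⟨g₀, rfl⟩ := Quotient.exists_rep c
  refine ⟨g₀⁻¹, ?_⟩
  rw [umem_mul_pure]
  have hm : {a : G | Quotient.mk (QuotientGroup.rightRel H) a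
      = Quotient.mk _ g₀} ∈ x := by
    have : {Quotient.mk (QuotientGroup.rightRel H) g₀} ∈ x.map (Quotient.mk (QuotientGroup.rightRel H)) := by
      rw [hc]; exact singleton_mem_pure
    exact this
  refine mem_of_superset hm ?_
  intro a ha
  have : (QuotientGroup.rightRel H) a g₀ := Quotient.exact ha
  rw [QuotientGroup.rightRel_apply] at this
  simpa using H.inv_mem this

end Aux


/-- Let `G` be a countable discrete group and `H ≤ G` a subgroup of finite index. Then `βH`
has a unique minimal closed right ideal iff `βG` has a unique minimal closed right ideal. -/
theorem unique_min_ideal_iff_of_finiteIndex {G : Type*} [Group G] [Countable G]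
    (H : Subgroup G) (hH : H.FiniteIndex) :
    (∃! R : Set (Ultrafilter H), IsMinClosedRightIdeal R) ↔
      ∃! R : Set (Ultrafilter G), IsMinClosedRightIdeal R := by
  have hβH_open : IsOpen {U : Ultrafilter G | (H : Set G) ∈ U} := ultrafilter_isOpen_basic _
  -- every nonempty closed right ideal of βG meets βH
  have meets : ∀ R : Set (Ultrafilter G), R.Nonempty → IsRightIdeal R →
      ∃ x ∈ R, (H : Set G) ∈ x := by
    intro R hne hid
    obtain ⟨x, hx⟩ := hne
    obtain ⟨g, hg⟩ := exists_translate H hH x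
    exact ⟨x * (pure g : Ultrafilter G), hid x hx _, hg⟩
  constructor
  · rintro ⟨S₀, hS₀, huniqS⟩
    -- the image of S₀ is contained in every nonempty closed right ideal of βG
    have key : ∀ R : Set (Ultrafilter G), R.Nonempty → IsClosed R → IsRightIdeal R →
        emb H '' S₀ ⊆ R := by
      intro R hne hcl hid
      obtain ⟨x, hxR, hxH⟩ := meets R hne hid
      obtain ⟨u, rfl⟩ := emb_surj H hxH
      have hT : (emb H ⁻¹' R).Nonempty := ⟨u, hxR⟩
      have hTcl : IsClosed (emb H ⁻¹' R) := hcl.preimage (emb_continuous H)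
      have hTid : IsRightIdeal (emb H ⁻¹' R) := by
        intro a ha b
        have : emb H (a * b) = emb H a * emb H b := emb_mul H a b
        simp only [Set.mem_preimage, this]
        exact hid _ ha _
      obtain ⟨M, hMT, hMmin⟩ := exists_min_subset _ hT hTcl hTid
      have : M = S₀ := huniqS M hMmin
      rintro _ ⟨v, hv, rfl⟩
      exact hMT (this ▸ hv : v ∈ M)
    obtain ⟨R₀, _, hR₀min⟩ := exists_min_subset (Set.univ : Set (Ultrafilter G))
      ⟨pure 1, trivial⟩ isClosed_univ (fun _ _ _ => trivial)
    refine ⟨R₀, hR₀min, ?_⟩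
    intro R hR
    obtain ⟨hRne, hRcl, hRid, hRm⟩ := hR
    obtain ⟨hR₀ne, hR₀cl, hR₀id, hR₀m⟩ := hR₀min
    have hsub1 : emb H '' S₀ ⊆ R := key R hRne hRcl hRid
    have hsub2 : emb H '' S₀ ⊆ R₀ := key R₀ hR₀ne hR₀cl hR₀id
    have hIne : (R ∩ R₀).Nonempty := by
      obtain ⟨s, hs⟩ := hS₀.1
      exact ⟨emb H s, hsub1 ⟨s, hs, rfl⟩, hsub2 ⟨s, hs, rfl⟩⟩
    have hIcl : IsClosed (R ∩ R₀) := hRcl.inter hR₀cl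
    have hIid : IsRightIdeal (R ∩ R₀) := fun x hx y => ⟨hRid x hx.1 y, hR₀id x hx.2 y⟩
    have e1 : R ∩ R₀ = R := hRm _ inter_subset_left hIne hIcl hIid
    have e2 : R ∩ R₀ = R₀ := hR₀m _ inter_subset_right hIne hIcl hIid
    rw [← e1, e2]
  · rintro ⟨R₀, hR₀, huniqR⟩
    -- key: image of each minimal closed right ideal of βH contains R₀ ∩ βH
    have key : ∀ S : Set (Ultrafilter H), S.Nonempty → IsClosed S → IsRightIdeal S →
        R₀ ∩ {U : Ultrafilter G | (H : Set G) ∈ U} ⊆ emb H '' S := by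
      intro S hSne hScl hSid
      set A : Set (Ultrafilter G) :=
        {z | ∃ x ∈ emb H '' S, ∃ y : Ultrafilter G, z = x * y} with hA
      have hAne : A.Nonempty := by
        obtain ⟨s, hs⟩ := hSne
        exact ⟨emb H s * emb H s, ⟨emb H s, ⟨s, hs, rfl⟩, emb H s, rfl⟩⟩
      have hAid : IsRightIdeal A := by
        rintro _ ⟨x, hx, y, rfl⟩ z
        exact ⟨x, hx, y * z, mul_assoc x y z⟩
      have hclid : IsRightIdeal (closure A) := closure_isRightIdeal hAid
      obtain ⟨M, hMsub, hMmin⟩ := exists_min_subset (closure A) (hAne.mono subset_closure)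
        isClosed_closure hclid
      have hMR₀ : M = R₀ := huniqR M hMmin
      have hR₀sub : R₀ ⊆ closure A := hMR₀ ▸ hMsub
      -- A ∩ βH ⊆ emb '' S
      have hAβH : A ∩ {U : Ultrafilter G | (H : Set G) ∈ U} ⊆ emb H '' S := by
        rintro _ ⟨⟨x, ⟨u, hu, rfl⟩, y, rfl⟩, hz⟩
        have hxH : (H : Set G) ∈ emb H u := H_mem_emb H u
        have hyH : (H : Set G) ∈ y := H_mem_right H hxH hz
        obtain ⟨v, rfl⟩ := emb_surj H hyH
        rw [← emb_mul]
        exact ⟨u * v, hSid u hu v, rfl⟩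
      have hembScl : IsClosed (emb H '' S) :=
        (hScl.isCompact.image (emb_continuous H)).isClosed
      intro z hz
      have hz1 : z ∈ closure A ∩ {U : Ultrafilter G | (H : Set G) ∈ U} :=
        ⟨hR₀sub hz.1, hz.2⟩
      have : z ∈ closure (A ∩ {U : Ultrafilter G | (H : Set G) ∈ U}) :=
        (hβH_open.closure_inter) hz1
      have := closure_mono hAβH this
      rwa [hembScl.closure_eq] at this
    obtain ⟨S₁, _, hS₁min⟩ := exists_min_subset (Set.univ : Set (Ultrafilter H))
      ⟨pure 1, trivial⟩ isClosed_univ (fun _ _ _ => trivial)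
    refine ⟨S₁, hS₁min, ?_⟩
    intro S hS
    obtain ⟨hSne, hScl, hSid, hSm⟩ := hS
    obtain ⟨hS₁ne, hS₁cl, hS₁id, hS₁m⟩ := hS₁min
    obtain ⟨x, hxR₀, hxH⟩ := meets R₀ hR₀.1 hR₀.2.2.1
    have h1 : x ∈ emb H '' S := key S hSne hScl hSid ⟨hxR₀, hxH⟩
    have h2 : x ∈ emb H '' S₁ := key S₁ hS₁ne hS₁cl hS₁id ⟨hxR₀, hxH⟩
    obtain ⟨u, hu, hux⟩ := h1
    obtain ⟨v, hv, hvx⟩ := h2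
    have huv : u = v := emb_injective H (hux.trans hvx.symm)
    have hIne : (S ∩ S₁).Nonempty := ⟨u, hu, huv ▸ hv⟩
    have hIcl : IsClosed (S ∩ S₁) := hScl.inter hS₁cl
    have hIid : IsRightIdeal (S ∩ S₁) := fun a ha b => ⟨hSid a ha.1 b, hS₁id a ha.2 b⟩
    have e1 : S ∩ S₁ = S := hSm _ inter_subset_left hIne hIcl hIid
    have e2 : S ∩ S₁ = S₁ := hS₁m _ inter_subset_right hIne hIcl hIid
    rw [← e1, e2]
end

section
/- Let (αₙ, βₙ)_{n≥1} be a sequence of pairs of positive integers, define ℓ₁ = 0 and inductively rₙ = ℓₙ + αₙ, ℓₙ₊₁ = rₙ + βₙ, and set A = ⋃_{n≥1} ([ℓₙ, rₙ) ∩ ℕ). Then ℕ \ A is not uniform-sub-Szemerédi if and only if sup_n βₙ < ∞ and for every D there exists a positive integer L(D) such that for every m ∈ ℕ there exists some 0 ≤ j < L(D) with α_{m+j} ≥ D. -/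
/-- Given a sequence `p` of pairs `(αₙ, βₙ)`, the left endpoints `ℓₙ` of the blocks:
`ℓ₀ = 0` and `ℓₙ₊₁ = ℓₙ + αₙ + βₙ` (so that `rₙ = ℓₙ + αₙ` and `ℓₙ₊₁ = rₙ + βₙ`). -/
def ell (p : ℕ → ℕ × ℕ) : ℕ → ℕ
  | 0 => 0
  | n + 1 => ell p n + (p n).1 + (p n).2

/-- The set `A = ⋃ₙ [ℓₙ, rₙ)` built from the sequence of block/gap lengths. -/
def buildSet (p : ℕ → ℕ × ℕ) : Set ℕ :=
  ⋃ n : ℕ, Set.Ico (ell p n) (ell p n + (p n).1)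

namespace NotUSSAux

variable (p : ℕ → ℕ × ℕ)

lemma ell_succ (n : ℕ) : ell p (n + 1) = ell p n + (p n).1 + (p n).2 := rfl

lemma le_ell (hp : ∀ n, 0 < (p n).1 ∧ 0 < (p n).2) (n : ℕ) : n ≤ ell p n := by
  induction n with
  | zero => exact le_refl _
  | succ n ih =>
    have h1 := (hp n).1
    rw [ell_succ]; omega

lemma ell_mono (hp : ∀ n, 0 < (p n).1 ∧ 0 < (p n).2) : Monotone (ell p) := by
  apply monotone_nat_of_le_succ
  intro n
  rw [ell_succ]; omega

lemma rn_le_ell (hp : ∀ n, 0 < (p n).1 ∧ 0 < (p n).2) {m n : ℕ} (h : m < n) :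
    ell p m + (p m).1 ≤ ell p n := by
  have h1 : ell p m + (p m).1 ≤ ell p (m + 1) := by rw [ell_succ]; omega
  exact le_trans h1 (ell_mono p hp h)

lemma exists_idx (hp : ∀ n, 0 < (p n).1 ∧ 0 < (p n).2) (x : ℕ) : ∃ n, x < ell p (n + 1) :=
  ⟨x, lt_of_lt_of_le (Nat.lt_succ_self x) (le_ell p hp (x + 1))⟩

def idx (hp : ∀ n, 0 < (p n).1 ∧ 0 < (p n).2) (x : ℕ) : ℕ := Nat.find (exists_idx p hp x)

lemma lt_ell_idx_succ (hp : ∀ n, 0 < (p n).1 ∧ 0 < (p n).2) (x : ℕ) :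
    x < ell p (idx p hp x + 1) := Nat.find_spec (exists_idx p hp x)

lemma ell_idx_le (hp : ∀ n, 0 < (p n).1 ∧ 0 < (p n).2) (x : ℕ) :
    ell p (idx p hp x) ≤ x := by
  rcases Nat.eq_zero_or_pos (idx p hp x) with h | h
  · rw [h]; exact Nat.zero_le _
  · obtain ⟨k, hk⟩ : ∃ k, idx p hp x = k + 1 := ⟨idx p hp x - 1, by omega⟩
    have hlt : k < idx p hp x := by omega
    have := Nat.find_min (exists_idx p hp x) hlt
    rw [hk]; omega

lemma idx_eq (hp : ∀ n, 0 < (p n).1 ∧ 0 < (p n).2) {x n : ℕ} (h1 : ell p n ≤ x)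
    (h2 : x < ell p (n + 1)) : idx p hp x = n := by
  have hle : idx p hp x ≤ n := Nat.find_min' (exists_idx p hp x) h2
  rcases lt_or_eq_of_le hle with h | h
  · exfalso
    have hmon : ell p (idx p hp x + 1) ≤ ell p n := ell_mono p hp (by omega)
    have := lt_ell_idx_succ p hp x
    omega
  · exact h

lemma idx_mono (hp : ∀ n, 0 < (p n).1 ∧ 0 < (p n).2) {x y : ℕ} (h : x ≤ y) :
    idx p hp x ≤ idx p hp y :=
  Nat.find_min' (exists_idx p hp x) (lt_of_le_of_lt h (lt_ell_idx_succ p hp y))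

lemma not_mem_buildSet_iff (hp : ∀ n, 0 < (p n).1 ∧ 0 < (p n).2) (x : ℕ) :
    x ∉ buildSet p ↔ ell p (idx p hp x) + (p (idx p hp x)).1 ≤ x := by
  rw [buildSet]
  simp only [Set.mem_iUnion, Set.mem_Ico, not_exists, not_and, not_lt]
  constructor
  · intro h
    exact h _ (ell_idx_le p hp x)
  · intro h n hn
    by_contra hc
    push_neg at hc
    have heq : idx p hp x = n := idx_eq p hp hn (lt_of_lt_of_le hc (by rw [ell_succ]; omega))
    rw [heq] at h
    omega

def nxt (hp : ∀ n, 0 < (p n).1 ∧ 0 < (p n).2) (x : ℕ) : ℕ :=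
  if x + 1 < ell p (idx p hp x + 1) then x + 1
  else ell p (idx p hp x + 1) + (p (idx p hp x + 1)).1

lemma nxt_spec (hp : ∀ n, 0 < (p n).1 ∧ 0 < (p n).2) {x n : ℕ}
    (h1 : ell p n + (p n).1 ≤ x) (h2 : x < ell p (n + 1)) :
    x < nxt p hp x ∧ nxt p hp x ≤ x + (p (n + 1)).1 + 1 ∧
      ((ell p n + (p n).1 ≤ nxt p hp x ∧ nxt p hp x < ell p (n + 1)) ∨
        (ell p (n + 1) + (p (n + 1)).1 ≤ nxt p hp x ∧ nxt p hp x < ell p (n + 1 + 1))) := by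
  have hidx : idx p hp x = n := idx_eq p hp (le_trans (Nat.le_add_right _ _) h1) h2
  unfold nxt
  rw [hidx]
  split_ifs with h
  · exact ⟨Nat.lt_succ_self x, by have := (hp (n + 1)).1; omega, Or.inl ⟨by omega, h⟩⟩
  · push_neg at h
    refine ⟨by omega, by omega, Or.inr ⟨le_refl _, ?_⟩⟩
    rw [ell_succ p (n + 1)]
    have := (hp (n + 1)).2
    omega

def gapSeq (hp : ∀ n, 0 < (p n).1 ∧ 0 < (p n).2) (s : ℕ) : ℕ → ℕ
  | 0 => ell p s + (p s).1
  | i + 1 => nxt p hp (gapSeq hp s i)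

lemma gapSeq_spec (hp : ∀ n, 0 < (p n).1 ∧ 0 < (p n).2) (s i : ℕ) :
    ∃ n, s ≤ n ∧ n ≤ s + i ∧ ell p n + (p n).1 ≤ gapSeq p hp s i ∧
      gapSeq p hp s i < ell p (n + 1) := by
  induction i with
  | zero =>
    simp only [gapSeq]
    refine ⟨s, le_refl _, by omega, le_refl _, ?_⟩
    rw [ell_succ]
    have := (hp s).2
    omega
  | succ i ih =>
    simp only [gapSeq]
    obtain ⟨n, h1, h2, h3, h4⟩ := ih
    obtain ⟨-, -, hcase⟩ := nxt_spec p hp h3 h4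
    rcases hcase with ⟨h5, h6⟩ | ⟨h5, h6⟩
    · exact ⟨n, h1, by omega, h5, h6⟩
    · exact ⟨n + 1, by omega, by omega, h5, h6⟩

end NotUSSAux

/-- `P` contains a sub-arithmetic progression of difference `D` and length `L`. -/
def HasSubAP (P : Set ℤ) (D : ℤ) (L : ℕ) : Prop :=
  ∃ q : ℕ → ℤ, (∀ i, i < L → q i ∈ P) ∧
    ∀ i, i + 1 < L → q i < q (i + 1) ∧ q (i + 1) - q i ≤ D

/-- `P ⊆ ℤ` is uniform-sub-Szemerédi. -/
def IsUSS (P : Set ℤ) : Prop :=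
  ∃ D : ℤ, 0 < D ∧ ∀ L : ℕ, HasSubAP P D L

open NotUSSAux

/-- Let `(αₙ, βₙ)` be a sequence of pairs of positive integers and let `A = ⋃ₙ [ℓₙ, rₙ)` be the
associated set. Then `ℕ \ A` is not uniform-sub-Szemerédi iff `supₙ βₙ < ∞` and for every `D`
there is a positive `L` such that every window `{m, …, m + L - 1}` contains some `j` with
`α_{m+j} ≥ D`. -/
theorem not_uss_compl_iff (p : ℕ → ℕ × ℕ) (hp : ∀ n, 0 < (p n).1 ∧ 0 < (p n).2) :
    ¬ IsUSS (((↑) : ℕ → ℤ) '' (buildSet p)ᶜ) ↔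
      (∃ b : ℕ, ∀ n, (p n).2 ≤ b) ∧
        ∀ D : ℕ, ∃ L : ℕ, 0 < L ∧ ∀ m : ℕ, ∃ j : ℕ, j < L ∧ D ≤ (p (m + j)).1 := by
  constructor
  · intro hN
    refine ⟨?_, ?_⟩
    · -- β bounded
      by_contra hb
      push_neg at hb
      apply hN
      refine ⟨1, one_pos, fun L => ?_⟩
      obtain ⟨n, hn⟩ := hb L
      refine ⟨fun i => ((ell p n + (p n).1 + i : ℕ) : ℤ), fun i hi => ?_, fun i _ => ?_⟩
      · refine ⟨ell p n + (p n).1 + i, ?_, rfl⟩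
        rw [Set.mem_compl_iff, not_mem_buildSet_iff p hp]
        have hidx : idx p hp (ell p n + (p n).1 + i) = n := by
          apply idx_eq p hp (by omega)
          rw [ell_succ]; omega
        rw [hidx]; omega
      · constructor
        · push_cast; omega
        · push_cast; omega
    · -- window condition
      intro D
      by_contra hw
      push_neg at hw
      have hD2 : 2 ≤ D := by
        obtain ⟨m, hm⟩ := hw 1 one_pos
        have h1 := hm 0 one_pos
        have h2 := (hp (m + 0)).1
        omega
      apply hN
      refine ⟨(D : ℤ), by exact_mod_cast (by omega : (0 : ℕ) < D), fun L => ?_⟩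
      obtain ⟨m, hm⟩ := hw (L + 1) (by omega)
      refine ⟨fun i => ((gapSeq p hp m i : ℕ) : ℤ), fun i _ => ?_, fun i hi => ?_⟩
      · obtain ⟨n, h1, h2, h3, h4⟩ := gapSeq_spec p hp m i
        refine ⟨gapSeq p hp m i, ?_, rfl⟩
        rw [Set.mem_compl_iff, not_mem_buildSet_iff p hp]
        have hidx : idx p hp (gapSeq p hp m i) = n :=
          idx_eq p hp (le_trans (Nat.le_add_right _ _) h3) h4
        rw [hidx]; exact h3
      · obtain ⟨n, h1, h2, h3, h4⟩ := gapSeq_spec p hp m i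
        obtain ⟨hlt, hle, -⟩ := nxt_spec p hp h3 h4
        have he : gapSeq p hp m (i + 1) = nxt p hp (gapSeq p hp m i) := rfl
        rw [← he] at hlt hle
        have hα : (p (n + 1)).1 < D := by
          have hj := hm (n + 1 - m) (by omega)
          have hmm : m + (n + 1 - m) = n + 1 := by omega
          rw [hmm] at hj
          omega
        show ((gapSeq p hp m i : ℕ) : ℤ) < ((gapSeq p hp m (i + 1) : ℕ) : ℤ) ∧
          ((gapSeq p hp m (i + 1) : ℕ) : ℤ) - ((gapSeq p hp m i : ℕ) : ℤ) ≤ (D : ℤ)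
        constructor
        · exact_mod_cast hlt
        · omega
  · rintro ⟨⟨b, hb⟩, hw⟩ ⟨D, hD, hAP⟩
    obtain ⟨L, hL, hwin⟩ := hw (D.toNat + 1)
    set N := b * (L + 1) + 1 with hNdef
    obtain ⟨q, hmem, hstep⟩ := hAP N
    set x : ℕ → ℕ := fun i => (q i).toNat with hxdef
    have hxspec : ∀ i, i < N → x i ∉ buildSet p ∧ (x i : ℤ) = q i := by
      intro i hi
      obtain ⟨a, ha, hqa⟩ := hmem i hi
      have hxa : x i = a := by simp [hxdef, ← hqa]
      rw [hxa]; exact ⟨ha, hqa⟩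
    have hDt : (D.toNat : ℤ) = D := Int.toNat_of_nonneg hD.le
    have hstep' : ∀ i, i + 1 < N → x i < x (i + 1) ∧ x (i + 1) ≤ x i + D.toNat := by
      intro i hi
      have h1 := (hxspec i (by omega)).2
      have h2 := (hxspec (i + 1) hi).2
      obtain ⟨hlt, hle⟩ := hstep i hi
      omega
    set g : ℕ → ℕ := fun i => idx p hp (x i) with hgdef
    have hgap : ∀ i, i < N → ell p (g i) + (p (g i)).1 ≤ x i ∧ x i < ell p (g i + 1) :=
      fun i hi => ⟨(not_mem_buildSet_iff p hp (x i)).mp (hxspec i hi).1,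
        lt_ell_idx_succ p hp (x i)⟩
    have hxmono : ∀ k i, i + k < N → x i ≤ x (i + k) := by
      intro k
      induction k with
      | zero => intro i _; exact le_refl _
      | succ k ih =>
        intro i hi
        have h1 := ih i (by omega)
        have h2 := (hstep' (i + k) (by omega)).1
        have he : i + (k + 1) = (i + k) + 1 := by omega
        rw [he]
        omega
    have hxmono' : ∀ i j, i ≤ j → j < N → x i ≤ x j := by
      intro i j hij hj
      have := hxmono (j - i) i (by omega)
      have he : i + (j - i) = j := by omega
      rwa [he] at this
    have hgmono : ∀ i j, i ≤ j → j < N → g i ≤ g j :=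
      fun i j hij hj => idx_mono p hp (hxmono' i j hij hj)
    obtain ⟨j, hjL, hjα⟩ := hwin (g 0 + 1)
    have hlastbound : g (N - 1) < g 0 + 1 + j := by
      by_contra hc
      push_neg at hc
      set k := g 0 + 1 + j with hkdef
      have hex : ∃ i, i < N ∧ k ≤ g i := ⟨N - 1, by omega, hc⟩
      set i0 := Nat.find hex with hi0def
      have hi0 : i0 < N ∧ k ≤ g i0 := Nat.find_spec hex
      have hi0pos : i0 ≠ 0 := by
        intro h
        rw [h] at hi0
        have : g 0 < k := by omega
        omega
      obtain ⟨i1, hi1⟩ : ∃ i1, i0 = i1 + 1 := ⟨i0 - 1, by omega⟩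
      have hlt1 : i1 < i0 := by omega
      have hprev := Nat.find_min hex hlt1
      push_neg at hprev
      have hi1N : i1 < N := by omega
      have hgi1 : g i1 < k := by
        by_contra hgc
        push_neg at hgc
        exact absurd (hprev hi1N) (by omega)
      obtain ⟨hlt, hle⟩ := hstep' i1 (by omega)
      have h1 : x i1 < ell p k :=
        lt_of_lt_of_le (hgap i1 hi1N).2 (ell_mono p hp (by omega))
      have hk2 : k ≤ g (i1 + 1) := by
        have := hi0.2
        rwa [hi1] at this
      have h2 : ell p k + (p k).1 ≤ x (i1 + 1) := by
        rcases eq_or_lt_of_le hk2 with h | h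
        · rw [h]
          exact (hgap (i1 + 1) (by omega)).1
        · exact le_trans (rn_le_ell p hp h) (ell_idx_le p hp (x (i1 + 1)))
      have hαk : D.toNat + 1 ≤ (p k).1 := hjα
      omega
    have hrange : ∀ i ∈ Finset.range N, g i ∈ Finset.Icc (g 0) (g 0 + L) := by
      intro i hi
      rw [Finset.mem_range] at hi
      rw [Finset.mem_Icc]
      constructor
      · exact hgmono 0 i (by omega) hi
      · have := hgmono i (N - 1) (by omega) (by omega)
        omega
    have hfiber : ∀ a ∈ Finset.Icc (g 0) (g 0 + L),
        ((Finset.range N).filter (fun i => g i = a)).card ≤ b := by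
      intro a _
      have hinj : ((Finset.range N).filter (fun i => g i = a)).card ≤
          (Finset.Ico (ell p a + (p a).1) (ell p (a + 1))).card := by
        apply Finset.card_le_card_of_injOn x
        · intro i hi
          rw [Finset.mem_coe, Finset.mem_filter, Finset.mem_range] at hi
          obtain ⟨hiN, hgi⟩ := hi
          have := hgap i hiN
          rw [hgi] at this
          rw [Finset.mem_coe, Finset.mem_Ico]
          exact this
        · intro i hi i' hi' hxe
          simp only [Finset.coe_filter, Set.mem_setOf_eq, Finset.mem_range] at hi hi'
          by_contra hne
          rcases Nat.lt_or_ge i i' with h | h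
          · have h1 := (hstep' i (by omega)).1
            have h2 := hxmono' (i + 1) i' (by omega) hi'.1
            omega
          · have h' : i' < i := by omega
            have h1 := (hstep' i' (by omega)).1
            have h2 := hxmono' (i' + 1) i (by omega) hi.1
            omega
      rw [Nat.card_Ico] at hinj
      have hell : ell p (a + 1) = ell p a + (p a).1 + (p a).2 := ell_succ p a
      have := hb a
      omega
    have hcard : N ≤ b * (L + 1) := by
      have key := Finset.card_le_mul_card_image_of_maps_to hrange b hfiber
      rw [Finset.card_range, Nat.card_Icc] at key
      have : g 0 + L + 1 - g 0 = L + 1 := by omega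
      rw [this] at key
      exact key
    omega
end

section
/- Let φ : G → H be a surjective group homomorphism between groups. If A ⊆ H is completely syndetic in H, then φ⁻¹(A) is completely syndetic in G. (More precisely, if A is n-syndetic in H then φ⁻¹(A) is n-syndetic in G.) -/
/-- Let `φ : G → H` be a surjective group homomorphism. If `A ⊆ H` is `n`-syndetic in `H` then
`φ⁻¹(A)` is `n`-syndetic in `G`; in particular if `A` is completely syndetic in `H` then
`φ⁻¹(A)` is completely syndetic in `G`. -/
theorem preimage_cs_of_surjective {G H : Type*} [Group G] [Group H]
    (φ : G →* H) (hφ : Function.Surjective φ) (A : Set H) :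
    (∀ n : ℕ, IsNSyndetic A n → IsNSyndetic (φ ⁻¹' A) n) ∧
      (IsCS A → IsCS (φ ⁻¹' A)) := by
  have key : ∀ n : ℕ, IsNSyndetic A n → IsNSyndetic (φ ⁻¹' A) n := by
    intro n ⟨F, hF⟩
    classical
    -- choose a section of φ
    choose sec hsec using hφ
    refine ⟨F.image sec, fun S hS => ?_⟩
    obtain ⟨f, hfF, hsub⟩ := hF (S.image φ) (le_trans (Finset.card_image_le) hS)
    refine ⟨sec f, Finset.mem_image_of_mem sec hfF, fun s hs => ?_⟩
    have : φ s ∈ (f * ·) '' A := hsub (by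
      simpa using Finset.mem_image_of_mem φ hs)
    obtain ⟨a, haA, ha⟩ := this
    refine ⟨(sec f)⁻¹ * s, ?_, by group⟩
    show φ ((sec f)⁻¹ * s) ∈ A
    have : φ ((sec f)⁻¹ * s) = a := by
      rw [map_mul, map_inv, hsec, ← ha]
      group
    rw [this]; exact haA
  exact ⟨key, fun hA n hn => key n (hA n hn)⟩
end
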